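/- arXiv:2108.13883 — 2 statements merged into one kernel-verified Lean document; each statement's English description precedes it below -/
import Mathlib

section
/- For any nonzero q with q ≠ ±1 and positive integers N, j, m with 1 ≤ j ≤ N, one has ([ (2N+1−j)m ]_q + [ j m ]_q) / [ (2N+1)m ]_q = ([ (N+1−j)m ]_q − [ (N−j)m ]_q) / ([ (N+1)m ]_q − [ N m ]_q), provided the denominators are nonzero. -/
/-- q-integer `[n]_q = (q^n - q^{-n})/(q - q^{-1})`. -/
noncomputable def qint (q : ℂ) (n : ℤ) : ℂ := (q ^ n - q ^ (-n)) / (q - q⁻¹)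

/-!
With `x = q ^ m`, the rule `[e m]_q = [e]_x [m]_q` reduces the identity to `m = 1`.
Put `u = x ^ (N + 1) - x ^ (-N)` and `v k = x ^ (N - k) + x ^ (k - N - 1)`. Then
`[2N+1-k] + [k] = v k * u / (x - x⁻¹)` and `[N+1-k] - [N-k] = v k * (x - 1) / (x - x⁻¹)`;
the denominators of the identity are the cases `k = 0`, so both sides equal `v j / v 0`.
-/

@[simp]
theorem qint_zero (q : ℂ) : qint q 0 = 0 := by
  simp [qint]

theorem qint_mul (q : ℂ) (e m : ℤ) : qint q (e * m) = qint (q ^ m) e * qint q m := by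
  have hpow : q ^ (e * m) = (q ^ m) ^ e := by rw [mul_comm, zpow_mul]
  have hpow_neg : q ^ (-(e * m)) = (q ^ m) ^ (-e) := by rw [← neg_mul, mul_comm, zpow_mul]
  simp only [qint, hpow, hpow_neg, zpow_neg q m]
  set x := q ^ m
  by_cases hx : x - x⁻¹ = 0
  · -- `x = x⁻¹`, so `x ^ e = x ^ (-e)` and the left side vanishes.
    have hinv : x⁻¹ = x := (sub_eq_zero.mp hx).symm
    rw [zpow_neg, ← inv_zpow, hinv, sub_self, zero_div, zero_div, zero_mul]
  · rw [div_mul_div_cancel₀ hx]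

section Factorization

variable {q : ℂ}

theorem qint_two_mul_add_one_sub_add_qint (hq : q ≠ 0) (n k : ℤ) :
    qint q (2 * n + 1 - k) + qint q k =
      (q ^ (n - k) + q ^ (k - n - 1)) * ((q ^ (n + 1) - q ^ (-n)) / (q - q⁻¹)) := by
  simp only [qint, two_mul, zpow_add₀ hq, zpow_sub₀ hq, zpow_neg, zpow_one]
  field_simp
  ring

theorem qint_add_one_sub_sub_qint_sub (hq : q ≠ 0) (n k : ℤ) :
    qint q (n + 1 - k) - qint q (n - k) =
      (q ^ (n - k) + q ^ (k - n - 1)) * ((q - 1) / (q - q⁻¹)) := by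
  simp only [qint, zpow_add₀ hq, zpow_sub₀ hq, zpow_neg, zpow_one]
  field_simp
  ring

theorem qint_two_mul_add_one_sub_add_qint_div (hq : q ≠ 0) (n k : ℤ)
    (h : qint q (2 * n + 1) ≠ 0) :
    (qint q (2 * n + 1 - k) + qint q k) / qint q (2 * n + 1) =
      (q ^ (n - k) + q ^ (k - n - 1)) / (q ^ n + q ^ (-n - 1)) := by
  have h₀ := qint_two_mul_add_one_sub_add_qint hq n 0
  simp only [sub_zero, zero_sub, qint_zero, add_zero] at h₀
  rw [h₀] at h ⊢
  rw [qint_two_mul_add_one_sub_add_qint hq, mul_div_mul_right _ _ (right_ne_zero_of_mul h)]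

theorem qint_add_one_sub_sub_qint_sub_div (hq : q ≠ 0) (n k : ℤ)
    (h : qint q (n + 1) - qint q n ≠ 0) :
    (qint q (n + 1 - k) - qint q (n - k)) / (qint q (n + 1) - qint q n) =
      (q ^ (n - k) + q ^ (k - n - 1)) / (q ^ n + q ^ (-n - 1)) := by
  have h₀ := qint_add_one_sub_sub_qint_sub hq n 0
  simp only [sub_zero, zero_sub] at h₀
  rw [h₀] at h ⊢
  rw [qint_add_one_sub_sub_qint_sub hq, mul_div_mul_right _ _ (right_ne_zero_of_mul h)]

end Factorization

theorem qint_ratio_identity_general (q : ℂ) (hq0 : q ≠ 0)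
    (N j : ℕ) (m : ℤ)
    (hd1 : qint q ((2 * (N : ℤ) + 1) * m) ≠ 0)
    (hd2 : qint q (((N : ℤ) + 1) * m) - qint q ((N : ℤ) * m) ≠ 0) :
    (qint q ((2 * (N : ℤ) + 1 - (j : ℤ)) * m) + qint q ((j : ℤ) * m)) /
        qint q ((2 * (N : ℤ) + 1) * m) =
      (qint q (((N : ℤ) + 1 - (j : ℤ)) * m) - qint q (((N : ℤ) - (j : ℤ)) * m)) /
        (qint q (((N : ℤ) + 1) * m) - qint q ((N : ℤ) * m)) := by
  have hx : q ^ m ≠ 0 := zpow_ne_zero m hq0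
  simp only [qint_mul q _ m, ← sub_mul, ← add_mul] at hd1 hd2 ⊢
  have hm : qint q m ≠ 0 := right_ne_zero_of_mul hd1
  rw [mul_div_mul_right _ _ hm, mul_div_mul_right _ _ hm,
    qint_two_mul_add_one_sub_add_qint_div hx _ _ (left_ne_zero_of_mul hd1),
    qint_add_one_sub_sub_qint_sub_div hx _ _ (left_ne_zero_of_mul hd2)]

theorem qint_ratio_identity (q : ℂ) (hq0 : q ≠ 0) (hq1 : q ≠ 1) (hq2 : q ≠ -1)
    (N j : ℕ) (hN : 1 ≤ N) (hj1 : 1 ≤ j) (hjN : j ≤ N) (m : ℤ) (hm : m ≠ 0)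
    (hd1 : qint q ((2 * (N : ℤ) + 1) * m) ≠ 0)
    (hd2 : qint q (((N : ℤ) + 1) * m) - qint q ((N : ℤ) * m) ≠ 0) :
    (qint q ((2 * (N : ℤ) + 1 - (j : ℤ)) * m) + qint q ((j : ℤ) * m)) /
        qint q ((2 * (N : ℤ) + 1) * m) =
      (qint q (((N : ℤ) + 1 - (j : ℤ)) * m) - qint q (((N : ℤ) - (j : ℤ)) * m)) /
        (qint q (((N : ℤ) + 1) * m) - qint q ((N : ℤ) * m)) :=
  qint_ratio_identity_general q hq0 N j m hd1 hd2
end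

section
/- With Δ(z) and δ(z) as above, for any integer s ∉ {0, 2, −2}, the identity Δ(z)Δ(x^s z) − Δ(z^{−1})Δ(x^{−s}z^{−1}) = c(x,r)·{ Δ(x^{s+1})·(δ(x^{−1}z) − δ(x^{s+1}z)) + Δ(x^{s−1})·(δ(x^{s−1}z) − δ(xz)) } holds as formal distributions, where c(x,r) = [r]_x [r−1]_x (x − x^{−1}). -/
open PowerSeries

/-- `[s]_x = (x^s − x^{−s})/(x − x^{−1})` for real `s` (via complex powers). -/
noncomputable def qnum (x : ℂ) (s : ℝ) : ℂ := (x ^ (s : ℂ) - x ^ (-s : ℂ)) / (x - x⁻¹)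

/-- `c(x,r) = [r]_x [r−1]_x (x − x^{−1})`. -/
noncomputable def cxr (x : ℂ) (r : ℝ) : ℂ := qnum x r * qnum x (r - 1) * (x - x⁻¹)

/-- The formal power series expansion (in nonnegative powers of `z`) of
`Δ(z) = (1 − x^{2r−1}z)(1 − x^{−2r+1}z)/((1 − xz)(1 − x^{−1}z))`. -/
noncomputable def Δps (x : ℂ) (r : ℝ) : PowerSeries ℂ :=
  (1 - PowerSeries.C (x ^ ((2 * r - 1 : ℝ) : ℂ)) * PowerSeries.X) *
    (1 - PowerSeries.C (x ^ ((-2 * r + 1 : ℝ) : ℂ)) * PowerSeries.X) *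
    PowerSeries.mk (fun n => x ^ n) * PowerSeries.mk (fun n => x⁻¹ ^ n)

/-- The value of the rational function `Δ` at a complex number `w`. -/
noncomputable def Δval (x : ℂ) (r : ℝ) (w : ℂ) : ℂ :=
  (1 - x ^ ((2 * r - 1 : ℝ) : ℂ) * w) * (1 - x ^ ((-2 * r + 1 : ℝ) : ℂ) * w) /
    ((1 - x * w) * (1 - x⁻¹ * w))

/-!
With `a = x^{2r-1}` one has `c(x,r)(x - x⁻¹) = a + a⁻¹ - x - x⁻¹`, which is exactly the partial
fraction expansion `Δ(z) = 1 + c(x,r) ((1 - x⁻¹z)⁻¹ - (1 - xz)⁻¹)`, valid both for the power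
series and for the rational function. A product of two geometric series splits as
`G_q G_{q'} = (1 - q'/q)⁻¹ G_q + (1 - q/q')⁻¹ G_{q'}`, so `Δ(z)Δ(wz)` is `1` plus simple-pole terms
at the four points `x, x⁻¹, (wx)⁻¹, x/w`; by the partial fraction expansion of `Δ` and the symmetry
`Δ(z⁻¹) = Δ(z)` their coefficients are `±c(x,r)Δ(wx)` and `±c(x,r)Δ(w/x)`. For `w = x^s`,
`0 < |x| < 1` and `s ∉ {0, ±2}` keep the four poles distinct. Reading off the coefficient of `z^n` gives
the identity for `n > 0`; for `n < 0` it is the case `s ↦ -s`, again by the symmetry of `Δ`, and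
for `n = 0` both sides vanish.
-/

namespace PowerSeries

variable {R : Type*} [CommRing R]

noncomputable def geom (q : R) : R⟦X⟧ := mk fun n => q ^ n

theorem one_sub_C_mul_X_mul_geom (q : R) : (1 - C q * X) * geom q = 1 := by
  have h := congrArg (rescale q) (mk_one_mul_one_sub_eq_one (S := R))
  rw [map_mul, map_sub, map_one, rescale_X, rescale_mk] at h
  simpa [geom, mul_comm] using h

theorem rescale_geom (w q : R) : rescale w (geom q) = geom (w * q) := by
  simp [geom, rescale_mk, mul_pow]

theorem rescale_C (w c : R) : rescale w (C c) = C c := by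
  ext n
  rw [coeff_rescale, coeff_C]
  split_ifs with h <;> simp [h]

theorem constantCoeff_rescale (w : R) (f : R⟦X⟧) :
    constantCoeff (rescale w f) = constantCoeff f := by
  rw [← coeff_zero_eq_constantCoeff_apply, coeff_rescale, pow_zero, one_mul,
    coeff_zero_eq_constantCoeff_apply]

theorem geom_mul_geom {K : Type*} [Field K] {q q' : K} (hq : q ≠ 0) (hq' : q' ≠ 0)
    (h : q ≠ q') :
    geom q * geom q' = C (1 - q' * q⁻¹)⁻¹ * geom q + C (1 - q * q'⁻¹)⁻¹ * geom q' := by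
  have hsub : q - q' ≠ 0 := sub_ne_zero.2 h
  have hk : C (q - q')⁻¹ * (C q - C q') = 1 := by
    rw [← map_sub, ← map_mul, inv_mul_cancel₀ hsub, map_one]
  have hα : C (1 - q' * q⁻¹)⁻¹ = C (q - q')⁻¹ * C q := by
    rw [← map_mul]
    congr 1
    field_simp
  have hβ : C (1 - q * q'⁻¹)⁻¹ = -(C (q - q')⁻¹ * C q') := by
    rw [← map_mul, ← map_neg]
    congr 1
    field_simp
    ring
  rw [hα, hβ]
  linear_combination (C (q - q')⁻¹ * C q * geom q) * one_sub_C_mul_X_mul_geom q' -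
    (C (q - q')⁻¹ * C q' * geom q') * one_sub_C_mul_X_mul_geom q - (geom q * geom q') * hk

end PowerSeries

theorem zpow_injective_of_norm_lt_one {𝕜 : Type*} [NormedDivisionRing 𝕜] {x : 𝕜} (hx0 : x ≠ 0)
    (hx1 : ‖x‖ < 1) : Function.Injective (x ^ · : ℤ → 𝕜) := by
  intro k l h
  apply zpow_right_injective₀ (norm_pos_iff.2 hx0) hx1.ne
  simpa only [norm_zpow] using congrArg norm h

section

variable {x : ℂ} {r : ℝ}

theorem cpow_neg_two_mul_add_one :
    x ^ ((-2 * r + 1 : ℝ) : ℂ) = (x ^ ((2 * r - 1 : ℝ) : ℂ))⁻¹ := by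
  rw [← Complex.cpow_neg]
  push_cast
  ring_nf

theorem cxr_mul_sub_inv (hx0 : x ≠ 0) (hx : x ^ 2 ≠ 1) :
    cxr x r * (x - x⁻¹) =
      x ^ ((2 * r - 1 : ℝ) : ℂ) + (x ^ ((2 * r - 1 : ℝ) : ℂ))⁻¹ - x - x⁻¹ := by
  have hmul : x ^ ((r : ℝ) : ℂ) * x ^ ((r - 1 : ℝ) : ℂ) = x ^ ((2 * r - 1 : ℝ) : ℂ) := by
    rw [← Complex.cpow_add _ _ hx0]
    push_cast
    ring_nf
  have hshift : x ^ ((r : ℝ) : ℂ) = x * x ^ ((r - 1 : ℝ) : ℂ) := by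
    rw [show ((r : ℝ) : ℂ) = 1 + ((r - 1 : ℝ) : ℂ) by push_cast; ring,
      Complex.cpow_add _ _ hx0, Complex.cpow_one]
  have hv : x ^ ((r - 1 : ℝ) : ℂ) ≠ 0 := by simp [hx0]
  have hx' : x ^ 2 - 1 ≠ 0 := sub_ne_zero.2 hx
  simp only [cxr, qnum, Complex.cpow_neg]
  rw [← hmul, hshift]
  generalize x ^ ((r - 1 : ℝ) : ℂ) = v at hv
  field_simp
  ring

theorem Δps_eq_partialFraction (hx0 : x ≠ 0) (hx : x ^ 2 ≠ 1) :
    Δps x r = 1 + C (cxr x r) * (geom x⁻¹ - geom x) := by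
  have hc := congrArg C (cxr_mul_sub_inv (r := r) hx0 hx)
  set a := x ^ ((2 * r - 1 : ℝ) : ℂ)
  have ha : a ≠ 0 := by simp [a, hx0]
  have haa : C a * C a⁻¹ = 1 := by rw [← map_mul, mul_inv_cancel₀ ha, map_one]
  have hxx : C x * C x⁻¹ = 1 := by rw [← map_mul, mul_inv_cancel₀ hx0, map_one]
  simp only [map_sub, map_add, map_mul] at hc
  rw [Δps, cpow_neg_two_mul_add_one]
  change _ * geom x * geom x⁻¹ = _
  linear_combination (geom x * geom x⁻¹) * (X * hc + X ^ 2 * haa - X ^ 2 * hxx)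
    + ((1 - C x⁻¹ * X) * geom x⁻¹) * one_sub_C_mul_X_mul_geom x
    + one_sub_C_mul_X_mul_geom x⁻¹
    + C (cxr x r) *
      (geom x⁻¹ * one_sub_C_mul_X_mul_geom x - geom x * one_sub_C_mul_X_mul_geom x⁻¹)

theorem Δval_eq_partialFraction (hx0 : x ≠ 0) (hx : x ^ 2 ≠ 1) {z : ℂ} (hz : z ≠ x⁻¹)
    (hz' : z ≠ x) :
    Δval x r z = 1 + cxr x r * ((1 - x⁻¹ * z)⁻¹ - (1 - x * z)⁻¹) := by
  replace hz : 1 - x * z ≠ 0 :=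
    sub_ne_zero.2 fun h => hz (eq_inv_of_mul_eq_one_right h.symm)
  replace hz' : 1 - x⁻¹ * z ≠ 0 :=
    sub_ne_zero.2 fun h => hz' (by simpa using eq_inv_of_mul_eq_one_right h.symm)
  have hc := cxr_mul_sub_inv (r := r) hx0 hx
  set a := x ^ ((2 * r - 1 : ℝ) : ℂ)
  have ha : a ≠ 0 := by simp [a, hx0]
  have hnum : (1 - a * z) * (1 - a⁻¹ * z) =
      (1 - x * z) * (1 - x⁻¹ * z) + cxr x r * ((1 - x * z) - (1 - x⁻¹ * z)) := by
    linear_combination z * hc + z ^ 2 * mul_inv_cancel₀ ha - z ^ 2 * mul_inv_cancel₀ hx0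
  rw [Δval, cpow_neg_two_mul_add_one, hnum]
  generalize 1 - x * z = u at hz ⊢
  generalize 1 - x⁻¹ * z = u' at hz' ⊢
  field_simp

theorem Δval_inv (hx0 : x ≠ 0) {z : ℂ} (hz : z ≠ 0) : Δval x r z⁻¹ = Δval x r z := by
  have hflip : ∀ p : ℂ, p ≠ 0 →
      (1 - p * z⁻¹) * (1 - p⁻¹ * z⁻¹) = z⁻¹ ^ 2 * ((1 - p * z) * (1 - p⁻¹ * z)) := by
    intro p hp
    field_simp
    ring
  have ha : x ^ ((2 * r - 1 : ℝ) : ℂ) ≠ 0 := by simp [hx0]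
  rw [Δval, Δval, cpow_neg_two_mul_add_one, hflip _ ha, hflip _ hx0,
    mul_div_mul_left _ _ (pow_ne_zero _ (inv_ne_zero hz))]

theorem Δps_mul_rescale_Δps (hx0 : x ≠ 0) (hx : x ^ 2 ≠ 1) {w : ℂ} (hw0 : w ≠ 0)
    (hw1 : w ≠ 1) (hw2 : w ≠ x ^ 2) (hw3 : w * x ^ 2 ≠ 1) :
    Δps x r * rescale w (Δps x r) =
      1 + C (cxr x r * Δval x r (w * x)) * (geom x⁻¹ - geom (w * x))
        + C (cxr x r * Δval x r (w * x⁻¹)) * (geom (w * x⁻¹) - geom x) := by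
  have hwx : w * x ≠ 0 := mul_ne_zero hw0 hx0
  have hwx' : w * x⁻¹ ≠ 0 := mul_ne_zero hw0 (inv_ne_zero hx0)
  have hinv_winv : x⁻¹ ≠ w * x⁻¹ := by field_simp; grind
  have hinv_wx : x⁻¹ ≠ w * x := by field_simp; grind
  have hx_winv : x ≠ w * x⁻¹ := by field_simp; grind
  have hx_wx : x ≠ w * x := by field_simp; grind
  have hG_inv_winv := geom_mul_geom (inv_ne_zero hx0) hwx' hinv_winv
  have hG_inv_wx := geom_mul_geom (inv_ne_zero hx0) hwx hinv_wx
  have hG_x_winv := geom_mul_geom hx0 hwx' hx_winv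
  have hG_x_wx := geom_mul_geom hx0 hwx hx_wx
  simp only [inv_inv] at hG_inv_winv hG_inv_wx
  have hΔ_wx : C (cxr x r * Δval x r (w * x)) = C (cxr x r) + C (cxr x r) * C (cxr x r) *
      (C (1 - w * x⁻¹ * x)⁻¹ - C (1 - w * x * x)⁻¹) := by
    rw [Δval_eq_partialFraction hx0 hx hinv_wx.symm hx_wx.symm]
    simp only [← map_mul, ← map_sub, ← map_add]
    ring_nf
  have hΔ_winv : C (cxr x r * Δval x r (w * x⁻¹)) = C (cxr x r) + C (cxr x r) * C (cxr x r) *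
      (C (1 - w * x⁻¹ * x⁻¹)⁻¹ - C (1 - w * x * x⁻¹)⁻¹) := by
    rw [Δval_eq_partialFraction hx0 hx hinv_winv.symm hx_winv.symm]
    simp only [← map_mul, ← map_sub, ← map_add]
    ring_nf
  have hΔ_winv' : C (cxr x r * Δval x r (w * x⁻¹)) = C (cxr x r) + C (cxr x r) * C (cxr x r) *
      (C (1 - x⁻¹ * (w * x⁻¹)⁻¹)⁻¹ - C (1 - x * (w * x⁻¹)⁻¹)⁻¹) := by
    rw [← Δval_inv hx0 hwx', Δval_eq_partialFraction hx0 hx (inv_injective.ne hx_winv.symm)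
      (by simpa using inv_injective.ne hinv_winv.symm)]
    simp only [← map_mul, ← map_sub, ← map_add]
    ring_nf
  have hΔ_wx' : C (cxr x r * Δval x r (w * x)) = C (cxr x r) + C (cxr x r) * C (cxr x r) *
      (C (1 - x⁻¹ * (w * x)⁻¹)⁻¹ - C (1 - x * (w * x)⁻¹)⁻¹) := by
    rw [← Δval_inv hx0 hwx, Δval_eq_partialFraction hx0 hx (inv_injective.ne hx_wx.symm)
      (by simpa using inv_injective.ne hinv_wx.symm)]
    simp only [← map_mul, ← map_sub, ← map_add]
    ring_nf
  rw [Δps_eq_partialFraction hx0 hx, map_add, map_one, map_mul, rescale_C, map_sub,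
    rescale_geom, rescale_geom]
  linear_combination
    (C (cxr x r) * C (cxr x r)) * (hG_inv_winv - hG_inv_wx - hG_x_winv + hG_x_wx)
      - geom x⁻¹ * hΔ_wx + geom x * hΔ_winv - geom (w * x⁻¹) * hΔ_winv' + geom (w * x) * hΔ_wx'

theorem coeff_Δps_mul_rescale_Δps (hx0 : x ≠ 0) (hx : x ^ 2 ≠ 1) {w : ℂ} (hw0 : w ≠ 0)
    (hw1 : w ≠ 1) (hw2 : w ≠ x ^ 2) (hw3 : w * x ^ 2 ≠ 1) {m : ℕ} (hm : m ≠ 0) :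
    coeff m (Δps x r * rescale w (Δps x r)) =
      cxr x r * (Δval x r (w * x) * (x⁻¹ ^ m - (w * x) ^ m) +
        Δval x r (w * x⁻¹) * ((w * x⁻¹) ^ m - x ^ m)) := by
  rw [Δps_mul_rescale_Δps hx0 hx hw0 hw1 hw2 hw3]
  simp only [map_add, map_sub, coeff_one, if_neg hm, coeff_C_mul, geom, coeff_mk]
  ring

theorem coeff_Δps_mul_rescale_zpow (hx0 : x ≠ 0) (hx1 : ‖x‖ < 1) {s : ℤ} (hs0 : s ≠ 0)
    (hs2 : s ≠ 2) (hs2' : s ≠ -2) {n : ℤ} (hn : 0 < n) :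
    coeff n.toNat (Δps x r * rescale (x ^ s) (Δps x r)) =
      cxr x r * (Δval x r (x ^ (s + 1)) * (x ^ (-n) - x ^ ((s + 1) * n)) +
        Δval x r (x ^ (s - 1)) * (x ^ ((s - 1) * n) - x ^ n)) := by
  have hinj := zpow_injective_of_norm_lt_one hx0 hx1
  have hsq : x ^ 2 = x ^ (2 : ℤ) := (zpow_ofNat x 2).symm
  obtain ⟨m, rfl⟩ := Int.eq_ofNat_of_zero_le hn.le
  rw [Int.toNat_natCast,
    coeff_Δps_mul_rescale_Δps hx0 ?_ (zpow_ne_zero s hx0) ?_ ?_ ?_ (by omega)]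
  · simp only [zpow_mul, zpow_natCast, zpow_add_one₀ hx0, zpow_sub_one₀ hx0, zpow_neg, inv_pow]
  · rw [hsq, ← zpow_zero x]; exact hinj.ne (by norm_num)
  · rw [← zpow_zero x]; exact hinj.ne hs0
  · rw [hsq]; exact hinj.ne hs2
  · rw [hsq, ← zpow_add₀ hx0, ← zpow_zero x]; exact hinj.ne (by omega)

end

theorem delta_series_product_difference_general (x : ℂ) (hx0 : x ≠ 0) (hx1 : ‖x‖ < 1)
    (r : ℝ) (s : ℤ) (hs0 : s ≠ 0) (hs2 : s ≠ 2) (hs2' : s ≠ -2) :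
    ∀ n : ℤ,
      (if 0 ≤ n then
          (PowerSeries.coeff n.toNat) (Δps x r * PowerSeries.rescale (x ^ s) (Δps x r))
        else 0) -
        (if 0 ≤ -n then
          (PowerSeries.coeff (-n).toNat) (Δps x r * PowerSeries.rescale (x ^ (-s)) (Δps x r))
        else 0) =
      cxr x r *
        (Δval x r (x ^ (s + 1)) * (x ^ (-n) - x ^ ((s + 1) * n)) +
          Δval x r (x ^ (s - 1)) * (x ^ ((s - 1) * n) - x ^ n)) := by
  intro n
  rcases lt_trichotomy n 0 with hn | rfl | hn
  · have hflip (k : ℤ) : Δval x r (x ^ (-k)) = Δval x r (x ^ k) := by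
      rw [zpow_neg, Δval_inv hx0 (zpow_ne_zero k hx0)]
    rw [if_neg (by omega), if_pos (by omega), zero_sub, coeff_Δps_mul_rescale_zpow hx0 hx1
      (neg_ne_zero.2 hs0) (by omega) (by omega) (neg_pos.2 hn), show -s + 1 = -(s - 1) by ring,
      show -s - 1 = -(s + 1) by ring, hflip, hflip, neg_neg, neg_mul_neg, neg_mul_neg]
    ring
  · simp [coeff_zero_eq_constantCoeff, Δps, constantCoeff_rescale]
  · rw [if_pos hn.le, if_neg (by omega), sub_zero,
      coeff_Δps_mul_rescale_zpow hx0 hx1 hs0 hs2 hs2' hn]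

/-- As formal distributions in `z`: for `s ∉ {0, 2, −2}`,
`Δ(z)Δ(x^s z) − Δ(z^{−1})Δ(x^{−s}z^{−1})
  = c(x,r)·{Δ(x^{s+1})(δ(x^{−1}z) − δ(x^{s+1}z)) + Δ(x^{s−1})(δ(x^{s−1}z) − δ(xz))}`,
where `Δ(z)Δ(x^s z)` is expanded in nonnegative powers of `z`, the second term
in negative powers, `Δ(x^{s±1})` are values of the rational function, and
`δ(z) = Σ_{m∈ℤ} z^m`. -/
theorem delta_series_product_difference (x : ℂ) (hx0 : x ≠ 0) (hx1 : ‖x‖ < 1)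
    (r : ℝ) (hr : 1 < r) (s : ℤ) (hs0 : s ≠ 0) (hs2 : s ≠ 2) (hs2' : s ≠ -2) :
    ∀ n : ℤ,
      (if 0 ≤ n then
          (PowerSeries.coeff n.toNat) (Δps x r * PowerSeries.rescale (x ^ s) (Δps x r))
        else 0) -
        (if 0 ≤ -n then
          (PowerSeries.coeff (-n).toNat) (Δps x r * PowerSeries.rescale (x ^ (-s)) (Δps x r))
        else 0) =
      cxr x r *
        (Δval x r (x ^ (s + 1)) * (x ^ (-n) - x ^ ((s + 1) * n)) +
          Δval x r (x ^ (s - 1)) * (x ^ ((s - 1) * n) - x ^ n)) :=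
  delta_series_product_difference_general x hx0 hx1 r s hs0 hs2 hs2'
end
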